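/- arXiv:1202.2468 — 2 statements merged into one kernel-verified Lean document; each statement's English description precedes it below -/
import Mathlib

section
/- Let G be a group of Hamming isometries of {0,1}^n, and let Ω(G) be its set of orbits. Then for any orbit ω_j ∈ Ω(G) and any x1, x2 in a common orbit ω_i, ∑_{y ∈ ω_j} θ^{|y ⊕ x1|}(1-θ)^{n-|y ⊕ x1|} = ∑_{y ∈ ω_j} θ^{|y ⊕ x2|}(1-θ)^{n-|y ⊕ x2|}. -/
open Finset
open scoped Classical

theorem MulAction.smul_mem_orbit_iff {G α : Type*} [Group G] [MulAction G α] (g : G) {y z : α} :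
    g • y ∈ MulAction.orbit G z ↔ y ∈ MulAction.orbit G z := by
  rw [← MulAction.orbit_eq_iff, MulAction.orbit_smul, MulAction.orbit_eq_iff]

/-- Reindexing by `y ↦ g • y`, which permutes every orbit. -/
theorem sum_orbit_eq_of_mem_orbit {G α β : Type*} [Group G] [MulAction G α] [Fintype α]
    [AddCommMonoid β] (f : α → α → β) (hf : ∀ (g : G) (x y : α), f (g • y) (g • x) = f y x)
    {x₁ x₂ : α} (hx : x₂ ∈ MulAction.orbit G x₁) (z : α) :
    ∑ y ∈ univ.filter (fun y => y ∈ MulAction.orbit G z), f y x₁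
      = ∑ y ∈ univ.filter (fun y => y ∈ MulAction.orbit G z), f y x₂ := by
  obtain ⟨g, rfl⟩ := hx
  refine Finset.sum_equiv (MulAction.toPerm g) (fun y => ?_) (fun y _ => (hf g x₁ y).symm)
  simp [MulAction.smul_mem_orbit_iff]

theorem isometry_group_orbits_lumpable_general (n : ℕ) (θ : ℝ)
    (G : Subgroup (Equiv.Perm (Fin n → ZMod 2)))
    (hiso : ∀ g ∈ G, ∀ x y : Fin n → ZMod 2,
      hammingDist (g x) (g y) = hammingDist x y)
    (x1 x2 : Fin n → ZMod 2) (hsame : x2 ∈ MulAction.orbit G x1)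
    (z : Fin n → ZMod 2) :
    ∑ y ∈ univ.filter (fun y => y ∈ MulAction.orbit G z),
        θ ^ (hammingDist y x1) * (1 - θ) ^ (n - hammingDist y x1)
      = ∑ y ∈ univ.filter (fun y => y ∈ MulAction.orbit G z),
        θ ^ (hammingDist y x2) * (1 - θ) ^ (n - hammingDist y x2) :=
  sum_orbit_eq_of_mem_orbit (fun y x => θ ^ hammingDist y x * (1 - θ) ^ (n - hammingDist y x))
    (fun g x y => by simp only [Subgroup.smul_def, Equiv.Perm.smul_def, hiso g g.2]) hsame z

/-- Orbits of a group of Hamming isometries satisfy the lumpability (Markov)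
property: for any orbit `ω_j` (the orbit of some point `z`) and any `x1, x2`
lying in a common orbit, the transition mass from `x1` into `ω_j` equals
that from `x2` into `ω_j`. -/
theorem isometry_group_orbits_lumpable (n : ℕ) (θ : ℝ) (h0 : 0 < θ) (h1 : θ < 1)
    (G : Subgroup (Equiv.Perm (Fin n → ZMod 2)))
    (hiso : ∀ g ∈ G, ∀ x y : Fin n → ZMod 2,
      hammingDist (g x) (g y) = hammingDist x y)
    (x1 x2 : Fin n → ZMod 2) (hsame : x2 ∈ MulAction.orbit G x1)
    (z : Fin n → ZMod 2) :
    ∑ y ∈ univ.filter (fun y => y ∈ MulAction.orbit G z),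
        θ ^ (hammingDist y x1) * (1 - θ) ^ (n - hammingDist y x1)
      = ∑ y ∈ univ.filter (fun y => y ∈ MulAction.orbit G z),
        θ ^ (hammingDist y x2) * (1 - θ) ^ (n - hammingDist y x2) :=
  isometry_group_orbits_lumpable_general n θ G hiso x1 x2 hsame z
end

section
/- If a refinement procedure only ever splits a block of a partition when the block contains two elements x1, x2 violating the lumpability equation with respect to some current block, and violations persist under further subdivision (as in the bipartition-persistence lemma), then the coarsest lumpable refinement of a given initial partition of {0,1}^n is unique. -/
/-!
A partition of a finite set is the same thing as the equivalence relation "lying in the same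
block", so the lumpable refinements of `P0` have a join `Q` in the complete lattice of
equivalence relations, and `Q` still refines `P0`. If a lumpable `R` refines `Q`, every block of
`Q` is a disjoint union of blocks of `R`, so the kernel sums over a block of `Q` are constant on
the blocks of `R`. Being constant on the blocks of every such `R`, they are constant on the
blocks of their join `Q`: thus `Q` is lumpable, hence the greatest lumpable refinement of `P0`.
-/

open Finset

namespace Finpartition

variable {α : Type*} [DecidableEq α]

theorem biUnion_filter_subset_of_le {s t : Finset α} {R Q : Finpartition s} (h : R ≤ Q)
    (ht : t ∈ Q.parts) : {b ∈ R.parts | b ⊆ t}.biUnion id = t := by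
  ext z
  simp only [mem_biUnion, mem_filter, id]
  refine ⟨fun ⟨b, ⟨_, hbt⟩, hzb⟩ => hbt hzb, fun hzt => ?_⟩
  have hzs : z ∈ s := Q.le ht hzt
  obtain ⟨c, hc, hRc⟩ := h (R.part_mem.2 hzs)
  rw [Q.eq_of_mem_parts hc ht (hRc (R.mem_part hzs)) hzt] at hRc
  exact ⟨R.part z, ⟨R.part_mem.2 hzs, hRc⟩, R.mem_part hzs⟩

theorem sum_filter_subset_of_le {M : Type*} [AddCommMonoid M] {s t : Finset α}
    {R Q : Finpartition s} (h : R ≤ Q) (ht : t ∈ Q.parts) (f : α → M) :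
    ∑ b ∈ R.parts with b ⊆ t, ∑ y ∈ b, f y = ∑ y ∈ t, f y := by
  conv_rhs => rw [← biUnion_filter_subset_of_le h ht]
  exact (sum_biUnion (R.disjoint.subset (coe_subset.2 (filter_subset _ _)))).symm

variable [Fintype α]

theorem ker_part_le_ker_part_iff {P Q : Finpartition (univ : Finset α)} :
    Setoid.ker P.part ≤ Setoid.ker Q.part ↔ P ≤ Q := by
  constructor
  · intro h b hb
    obtain ⟨x, hxb⟩ := P.nonempty_of_mem_parts hb
    refine ⟨Q.part x, Q.part_mem.2 (mem_univ x), fun y hyb => ?_⟩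
    have hPxy : P.part x = P.part y := by
      rw [P.part_eq_of_mem hb hxb, P.part_eq_of_mem hb hyb]
    rw [h hPxy]
    exact Q.mem_part (mem_univ y)
  · intro h x y (hPxy : P.part x = P.part y)
    obtain ⟨c, hc, hPc⟩ := h (P.part_mem.2 (mem_univ x))
    have hyc : y ∈ c := hPc (hPxy ▸ P.mem_part (mem_univ y))
    exact (Q.part_eq_of_mem hc (hPc (P.mem_part (mem_univ x)))).trans
      (Q.part_eq_of_mem hc hyc).symm

theorem ker_part_ofSetoid (r : Setoid α) [DecidableRel r] :
    Setoid.ker (ofSetoid r).part = r := by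
  ext a b
  rw [Setoid.ker_def, eq_comm, ← (ofSetoid r).mem_part_iff_part_eq_part (mem_univ b) (mem_univ a),
    mem_part_ofSetoid_iff_rel]

end Finpartition

section Lumpable

open Finpartition

variable {α M : Type*} [DecidableEq α] [AddCommMonoid M]

/-- `w y x` plays the role of the transition weight `s ^ |y ⊕ x|` from `x` to `y`. -/
def IsLumpable {s : Finset α} (w : α → α → M) (P : Finpartition s) : Prop :=
  ∀ Wi ∈ P.parts, ∀ Wj ∈ P.parts, ∀ x1 ∈ Wi, ∀ x2 ∈ Wi,
    ∑ y ∈ Wj, w y x1 = ∑ y ∈ Wj, w y x2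

theorem IsLumpable.sum_eq_of_le {s t b : Finset α} {w : α → α → M} {R Q : Finpartition s}
    (hR : IsLumpable w R) (hRQ : R ≤ Q) (ht : t ∈ Q.parts) (hb : b ∈ R.parts)
    {x1 x2 : α} (hx1 : x1 ∈ b) (hx2 : x2 ∈ b) :
    ∑ y ∈ t, w y x1 = ∑ y ∈ t, w y x2 := by
  rw [← sum_filter_subset_of_le hRQ ht, ← sum_filter_subset_of_le hRQ ht]
  exact sum_congr rfl fun c hc => hR b hb c (mem_filter.1 hc).1 x1 hx1 x2 hx2

variable [Fintype α]

theorem IsLumpable.ker_part_le_of_le {t : Finset α} {w : α → α → M}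
    {R Q : Finpartition (univ : Finset α)} (hR : IsLumpable w R) (hRQ : R ≤ Q)
    (ht : t ∈ Q.parts) : Setoid.ker R.part ≤ Setoid.ker fun x => ∑ y ∈ t, w y x :=
  fun x1 x2 (h : R.part x1 = R.part x2) =>
    hR.sum_eq_of_le hRQ ht (R.part_mem.2 (mem_univ x1)) (R.mem_part (mem_univ x1))
      (h ▸ R.mem_part (mem_univ x2))

theorem isLumpable_iff_ker_part_le {w : α → α → M} {P : Finpartition (univ : Finset α)} :
    IsLumpable w P ↔ ∀ t ∈ P.parts, Setoid.ker P.part ≤ Setoid.ker fun x => ∑ y ∈ t, w y x := by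
  refine ⟨fun hP t ht => hP.ker_part_le_of_le le_rfl ht, fun h Wi hWi Wj hWj x1 hx1 x2 hx2 => ?_⟩
  exact h Wj hWj ((P.part_eq_of_mem hWi hx1).trans (P.part_eq_of_mem hWi hx2).symm)

theorem exists_isGreatest_isLumpable_le (w : α → α → M) (P0 : Finpartition (univ : Finset α)) :
    ∃ Q, IsGreatest {R | R ≤ P0 ∧ IsLumpable w R} Q := by
  classical
  set S := {R | R ≤ P0 ∧ IsLumpable w R}
  set c : Setoid α := sSup ((fun R : Finpartition univ => Setoid.ker R.part) '' S)
  have hQc : Setoid.ker (ofSetoid c).part = c := ker_part_ofSetoid c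
  have hle : ∀ R ∈ S, R ≤ ofSetoid c := fun R hR =>
    ker_part_le_ker_part_iff.1 (hQc.symm ▸ le_sSup ⟨R, hR, rfl⟩)
  have hQP0 : ofSetoid c ≤ P0 := by
    refine ker_part_le_ker_part_iff.1 (hQc.symm ▸ sSup_le ?_)
    rintro _ ⟨R, hR, rfl⟩
    exact ker_part_le_ker_part_iff.2 hR.1
  have hQ : IsLumpable w (ofSetoid c) := by
    refine isLumpable_iff_ker_part_le.2 fun t ht => hQc.symm ▸ sSup_le ?_
    rintro _ ⟨R, hR, rfl⟩
    exact hR.2.ker_part_le_of_le (hle R hR) ht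
  exact ⟨ofSetoid c, ⟨hQP0, hQ⟩, hle⟩

end Lumpable

theorem unique_coarsest_lumpable_refinement_general (n : ℕ) (s : ℝ)
    (P0 : Finpartition (Finset.univ : Finset (Fin n → ZMod 2))) :
    let Lumpable : Finpartition (Finset.univ : Finset (Fin n → ZMod 2)) → Prop :=
      fun P => ∀ Wi ∈ P.parts, ∀ Wj ∈ P.parts, ∀ x1 ∈ Wi, ∀ x2 ∈ Wi,
        ∑ y ∈ Wj, s ^ (hammingDist y x1) = ∑ y ∈ Wj, s ^ (hammingDist y x2)
    ∃! Q : Finpartition (Finset.univ : Finset (Fin n → ZMod 2)),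
      Q ≤ P0 ∧ Lumpable Q ∧
        ∀ R : Finpartition (Finset.univ : Finset (Fin n → ZMod 2)),
          R ≤ P0 → Lumpable R → R ≤ Q := by
  intro Lumpable
  obtain ⟨Q, hQ⟩ := exists_isGreatest_isLumpable_le (fun y x => s ^ hammingDist y x) P0
  refine ⟨Q, ⟨hQ.1.1, hQ.1.2, fun R hRP0 hR => hQ.2 ⟨hRP0, hR⟩⟩, ?_⟩
  rintro Q' ⟨hQ'P0, hQ', hmax'⟩
  exact (hQ.unique ⟨⟨hQ'P0, hQ'⟩, fun R hR => hmax' R hR.1 hR.2⟩).symm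

/-- Uniqueness of the maximum ensemble (Theorem 2): among all lumpable
partitions of `{0,1}^n` refining a given initial partition `P0`, there is a
unique coarsest one.  Here a partition is lumpable if for all blocks
`W_i, W_j` and all `x1, x2 ∈ W_i`,
`∑_{y∈W_j} s^{|y⊕x1|} = ∑_{y∈W_j} s^{|y⊕x2|}` (for the fixed `s ∈ (0,1)`),
and `Q ≤ P` in the `Finpartition` order means `Q` refines `P`. -/
theorem unique_coarsest_lumpable_refinement (n : ℕ) (s : ℝ)
    (hs : s ∈ Set.Ioo (0:ℝ) 1)
    (P0 : Finpartition (Finset.univ : Finset (Fin n → ZMod 2))) :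
    let Lumpable : Finpartition (Finset.univ : Finset (Fin n → ZMod 2)) → Prop :=
      fun P => ∀ Wi ∈ P.parts, ∀ Wj ∈ P.parts, ∀ x1 ∈ Wi, ∀ x2 ∈ Wi,
        ∑ y ∈ Wj, s ^ (hammingDist y x1) = ∑ y ∈ Wj, s ^ (hammingDist y x2)
    ∃! Q : Finpartition (Finset.univ : Finset (Fin n → ZMod 2)),
      Q ≤ P0 ∧ Lumpable Q ∧
        ∀ R : Finpartition (Finset.univ : Finset (Fin n → ZMod 2)),
          R ≤ P0 → Lumpable R → R ≤ Q :=
  unique_coarsest_lumpable_refinement_general n s P0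
end
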